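/- arXiv:2403.12056 — 2 statements merged into one kernel-verified Lean document; each statement's English description precedes it below -/
import Mathlib

section
/- Let n ≥ 2 and fix an index, say 1. Let (L₁⁽ᵏ⁾, …, Lₙ⁽ᵏ⁾)_{k∈ℕ} be a sequence of n-tuples of strictly positive reals such that L₁⁽ᵏ⁾ → 0 as k → ∞, and there exist constants 0 < ε ≤ M with ε ≤ Lᵢ⁽ᵏ⁾ ≤ M for all k and all i ≠ 1. Define the reverse-attention weights Wᵢ⁽ᵏ⁾ = exp(1/Lᵢ⁽ᵏ⁾) / (∑_{j=1}^n exp(1/Lⱼ⁽ᵏ⁾)) and the reverse-attention loss L_ra⁽ᵏ⁾ = ∑_{i=1}^n Wᵢ⁽ᵏ⁾ Lᵢ⁽ᵏ⁾. Then L_ra⁽ᵏ⁾ → 0 as k → ∞. -/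
/-!
Since the normalising sum dominates `exp (1 / L i₀)`, each weight satisfies
`Wᵢ ≤ exp (1 / Lᵢ - 1 / L i₀)`, so `L_ra ≤ ∑ᵢ exp (1 / Lᵢ - 1 / L i₀) Lᵢ`. The `i₀` term of this
bound is `L i₀ → 0`, and every other term is at most `M exp (1 / ε) exp (-1 / L i₀) → 0`.
-/

open Real Filter Topology Finset

noncomputable def reverseAttentionLoss {ι : Type*} [Fintype ι] (L : ι → ℝ) : ℝ :=
  ∑ i, (exp (1 / L i) / ∑ j, exp (1 / L j)) * L i

theorem exp_div_sum_exp_le_exp_sub {ι : Type*} [Fintype ι] (f : ι → ℝ) (i j : ι) :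
    exp (f i) / ∑ k, exp (f k) ≤ exp (f i - f j) := by
  rw [exp_sub]
  exact div_le_div_of_nonneg_left (exp_pos _).le (exp_pos _)
    (single_le_sum (fun k _ => (exp_pos (f k)).le) (mem_univ j))

section

variable {ι : Type*} [Fintype ι] {L : ι → ℝ}

theorem reverseAttentionLoss_nonneg (hL : ∀ i, 0 ≤ L i) : 0 ≤ reverseAttentionLoss L :=
  sum_nonneg fun i _ => mul_nonneg (by positivity) (hL i)

theorem reverseAttentionLoss_le_sum_exp_sub (hL : ∀ i, 0 ≤ L i) (i₀ : ι) :
    reverseAttentionLoss L ≤ ∑ i, exp (1 / L i - 1 / L i₀) * L i :=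
  sum_le_sum fun i _ =>
    mul_le_mul_of_nonneg_right (exp_div_sum_exp_le_exp_sub (fun j => 1 / L j) i i₀) (hL i)

end

theorem tendsto_exp_sub_inv_of_tendsto_nhdsGT_zero {α : Type*} {l : Filter α} {u : α → ℝ}
    (hu : Tendsto u l (𝓝[>] 0)) (c : ℝ) :
    Tendsto (fun a => exp (c - 1 / u a)) l (𝓝 0) := by
  have hinv : Tendsto (fun a => 1 / u a) l atTop := by
    simp only [one_div]
    exact hu.inv_tendsto_nhdsGT_zero
  exact tendsto_exp_atBot.comp
    (tendsto_atBot_add_const_left l c (tendsto_neg_atTop_atBot.comp hinv))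

theorem reverse_attention_loss_tendsto_zero_general
    (n : ℕ) (i₀ : Fin n) (L : ℕ → Fin n → ℝ)
    (hpos : ∀ k i, 0 < L k i)
    (h0 : Filter.Tendsto (fun k => L k i₀) Filter.atTop (nhds 0))
    (ε M : ℝ) (hε : 0 < ε)
    (hlb : ∀ k, ∀ i ≠ i₀, ε ≤ L k i) (hub : ∀ k, ∀ i ≠ i₀, L k i ≤ M) :
    Filter.Tendsto
      (fun k => ∑ i, (Real.exp (1 / L k i) / ∑ j, Real.exp (1 / L k j)) * L k i)
      Filter.atTop (nhds 0) := by
  have hi₀ : Tendsto (fun k => L k i₀) atTop (𝓝[>] 0) :=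
    tendsto_nhdsWithin_iff.2 ⟨h0, .of_forall (hpos · i₀)⟩
  have hterm : ∀ i, Tendsto (fun k => exp (1 / L k i - 1 / L k i₀) * L k i) atTop (𝓝 0) := by
    intro i
    by_cases hi : i = i₀
    · subst hi
      simpa using h0
    · refine squeeze_zero (fun k => mul_nonneg (exp_pos _).le (hpos k i).le) (fun k => ?_)
        (by simpa only [zero_mul] using
          (tendsto_exp_sub_inv_of_tendsto_nhdsGT_zero hi₀ (1 / ε)).mul_const M)
      have hinv : 1 / L k i ≤ 1 / ε := one_div_le_one_div_of_le hε (hlb k i hi)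
      exact mul_le_mul (exp_le_exp.2 (by linarith)) (hub k i hi) (hpos k i).le (exp_pos _).le
  refine squeeze_zero (fun k => reverseAttentionLoss_nonneg fun i => (hpos k i).le)
    (fun k => reverseAttentionLoss_le_sum_exp_sub (fun i => (hpos k i).le) i₀) ?_
  simpa using tendsto_finsetSum univ fun i _ => hterm i

/-- paper's THEOREM 0: if along a sequence of tuples of strictly positive losses
the loss of a fixed candidate `i₀` tends to 0 while all other losses stay in `[ε, M]` with
`0 < ε ≤ M`, then the reverse-attention loss `L_ra = ∑ᵢ Wᵢ Lᵢ` tends to 0. -/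
theorem reverse_attention_loss_tendsto_zero
    (n : ℕ) (hn : 2 ≤ n) (i₀ : Fin n) (L : ℕ → Fin n → ℝ)
    (hpos : ∀ k i, 0 < L k i)
    (h0 : Filter.Tendsto (fun k => L k i₀) Filter.atTop (nhds 0))
    (ε M : ℝ) (hε : 0 < ε) (hεM : ε ≤ M)
    (hlb : ∀ k, ∀ i ≠ i₀, ε ≤ L k i) (hub : ∀ k, ∀ i ≠ i₀, L k i ≤ M) :
    Filter.Tendsto
      (fun k => ∑ i, (Real.exp (1 / L k i) / ∑ j, Real.exp (1 / L k j)) * L k i)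
      Filter.atTop (nhds 0) :=
  reverse_attention_loss_tendsto_zero_general n i₀ L hpos h0 ε M hε hlb hub
end

section
/- Let E be a real inner product space and let f : E → ℝ be convex and differentiable with ∇f Lipschitz continuous with constant C > 0. Let 0 < t ≤ 1/C and let x* ∈ E be a minimizer of f. Then for every x ∈ E, the gradient step x⁺ = x − t∇f(x) satisfies f(x⁺) − f(x*) ≤ (1/(2t)) (‖x − x*‖² − ‖x⁺ − x*‖²). -/
/-!
Convexity bounds `f x` above by `f x* + ⟪∇f x, x - x*⟫`, and the descent lemma for a
`C`-Lipschitz gradient gives the sufficient decrease `f x⁺ ≤ f x - t/2 ‖∇f x‖²` once `C t ≤ 1`.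
Adding the two, the right-hand side is exactly `(‖x - x*‖² - ‖x⁺ - x*‖²) / (2t)` after expanding
`‖(x - x*) - t ∇f x‖²`.
-/

open scoped RealInnerProductSpace

section

variable {E : Type*} [NormedAddCommGroup E] [InnerProductSpace ℝ E] [CompleteSpace E]
  {f : E → ℝ}

theorem DifferentiableAt.hasDerivAt_comp_add_smul {x d : E} {s : ℝ}
    (hf : DifferentiableAt ℝ f (x + s • d)) :
    HasDerivAt (fun s : ℝ => f (x + s • d)) ⟪gradient f (x + s • d), d⟫ s := by
  have hline : HasDerivAt (fun s : ℝ => x + s • d) d s := by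
    simpa using ((hasDerivAt_id s).smul_const d).const_add x
  exact (hasGradientAt_iff_hasFDerivAt.mp hf.hasGradientAt).comp_hasDerivAt s hline

theorem ConvexOn.add_inner_gradient_le (hconv : ConvexOn ℝ Set.univ f) {x : E}
    (hf : DifferentiableAt ℝ f x) (z : E) :
    f x + ⟪gradient f x, z - x⟫ ≤ f z := by
  have hline : ConvexOn ℝ Set.univ (fun s : ℝ => f (x + s • (z - x))) := by
    simpa [Function.comp_def, AffineMap.lineMap_apply_module', add_comm]
      using hconv.comp_affineMap (AffineMap.lineMap x z)
  have hderiv := DifferentiableAt.hasDerivAt_comp_add_smul (d := z - x) (s := 0)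
    (by simpa using hf)
  have hslope := hline.le_slope_of_hasDerivAt (Set.mem_univ 0) (Set.mem_univ 1) one_pos hderiv
  simp only [slope_def_field, zero_smul, add_zero, one_smul, add_sub_cancel, sub_zero,
    div_one] at hslope
  linarith

theorem le_add_inner_gradient_add_sq_of_lipschitz_gradient (hf : Differentiable ℝ f) {C : ℝ}
    (hlip : ∀ x y : E, ‖gradient f x - gradient f y‖ ≤ C * ‖x - y‖) (x y : E) :
    f y ≤ f x + ⟪gradient f x, y - x⟫ + C / 2 * ‖y - x‖ ^ 2 := by
  set d := y - x
  -- `ψ` is antitone on `[0, 1]`: its derivative is `⟪∇f (x + s d) - ∇f x, d⟫ - C s ‖d‖² ≤ 0`.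
  let ψ : ℝ → ℝ := fun s => f (x + s • d) - s * ⟪gradient f x, d⟫ - C / 2 * s ^ 2 * ‖d‖ ^ 2
  let ψ' : ℝ → ℝ := fun s => ⟪gradient f (x + s • d) - gradient f x, d⟫ - C * s * ‖d‖ ^ 2
  have hψ (s : ℝ) : HasDerivAt ψ (ψ' s) s := by
    have hquad : HasDerivAt (fun s : ℝ => C / 2 * s ^ 2 * ‖d‖ ^ 2) (C * s * ‖d‖ ^ 2) s :=
      (((hasDerivAt_pow 2 s).const_mul (C / 2)).mul_const (‖d‖ ^ 2)).congr_deriv (by ring)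
    exact (((hf _).hasDerivAt_comp_add_smul.sub (hasDerivAt_mul_const _)).sub hquad).congr_deriv
      (by rw [← inner_sub_left])
  have hψ'_nonpos {s : ℝ} (hs : 0 ≤ s) : ψ' s ≤ 0 := by
    have hgrad : ‖gradient f (x + s • d) - gradient f x‖ ≤ C * (s * ‖d‖) := by
      simpa [norm_smul, abs_of_nonneg hs] using hlip (x + s • d) x
    have := (real_inner_le_norm _ d).trans (mul_le_mul_of_nonneg_right hgrad (norm_nonneg d))
    simp only [ψ']
    nlinarith
  obtain ⟨c, hc, hslope⟩ := exists_hasDerivAt_eq_slope ψ ψ' one_pos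
    (fun s _ => (hψ s).continuousAt.continuousWithinAt) (fun s _ => hψ s)
  have hψ01 : ψ 1 ≤ ψ 0 := by
    have := hψ'_nonpos hc.1.le
    rw [hslope] at this
    linarith
  simpa [ψ, d, sub_le_iff_le_add, add_assoc, add_comm, add_left_comm] using hψ01

theorem gradient_step_sufficient_decrease (hf : Differentiable ℝ f) {C : ℝ}
    (hlip : ∀ x y : E, ‖gradient f x - gradient f y‖ ≤ C * ‖x - y‖) {t : ℝ} (ht : 0 ≤ t)
    (htC : C * t ≤ 1) (x : E) :
    f (x - t • gradient f x) ≤ f x - t / 2 * ‖gradient f x‖ ^ 2 := by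
  have hdescent := le_add_inner_gradient_add_sq_of_lipschitz_gradient hf hlip x
    (x - t • gradient f x)
  rw [sub_sub_cancel_left, inner_neg_right, real_inner_smul_right, real_inner_self_eq_norm_sq,
    norm_neg, norm_smul, Real.norm_eq_abs, abs_of_nonneg ht] at hdescent
  have hsq : 0 ≤ t * ‖gradient f x‖ ^ 2 := by positivity
  nlinarith [mul_le_mul_of_nonneg_right htC hsq]

end

theorem norm_sub_sq_sub_norm_sub_smul_sub_sq {E : Type*} [NormedAddCommGroup E]
    [InnerProductSpace ℝ E] (x y g : E) (t : ℝ) :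
    ‖x - y‖ ^ 2 - ‖x - t • g - y‖ ^ 2 = 2 * t * ⟪g, x - y⟫ - t ^ 2 * ‖g‖ ^ 2 := by
  rw [sub_right_comm, norm_sub_sq_real (x - y), real_inner_smul_right, real_inner_comm,
    norm_smul, Real.norm_eq_abs, mul_pow, sq_abs]
  ring

theorem gradient_step_telescoping_bound_general
    {E : Type*} [NormedAddCommGroup E] [InnerProductSpace ℝ E] [CompleteSpace E]
    (f : E → ℝ) (hconv : ConvexOn ℝ Set.univ f) (hdiff : Differentiable ℝ f)
    (C : ℝ) (hC : 0 < C)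
    (hlip : ∀ x y : E, ‖gradient f x - gradient f y‖ ≤ C * ‖x - y‖)
    (t : ℝ) (ht : 0 < t) (htC : t ≤ 1 / C)
    (xstar : E) :
    ∀ x : E, f (x - t • gradient f x) - f xstar
      ≤ 1 / (2 * t) * (‖x - xstar‖ ^ 2 - ‖x - t • gradient f x - xstar‖ ^ 2) := by
  intro x
  have hCt : C * t ≤ 1 := by rwa [le_div_iff₀' hC] at htC
  have hdecrease := gradient_step_sufficient_decrease hdiff hlip ht.le hCt x
  have hlower := hconv.add_inner_gradient_le (hdiff x) xstar
  have hinner : ⟪gradient f x, xstar - x⟫ = -⟪gradient f x, x - xstar⟫ := by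
    rw [← inner_neg_right, neg_sub]
  rw [norm_sub_sq_sub_norm_sub_smul_sub_sq, one_div, ← div_eq_inv_mul, le_div_iff₀ (by positivity)]
  nlinarith

/-- per-iteration bound: for convex differentiable `f` with `C`-Lipschitz gradient,
step size `0 < t ≤ 1/C` and a minimizer `x*`, the gradient step `x⁺ = x − t∇f(x)` satisfies
`f(x⁺) − f(x*) ≤ (1/(2t)) (‖x − x*‖² − ‖x⁺ − x*‖²)`. -/
theorem gradient_step_telescoping_bound
    {E : Type*} [NormedAddCommGroup E] [InnerProductSpace ℝ E] [CompleteSpace E]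
    (f : E → ℝ) (hconv : ConvexOn ℝ Set.univ f) (hdiff : Differentiable ℝ f)
    (C : ℝ) (hC : 0 < C)
    (hlip : ∀ x y : E, ‖gradient f x - gradient f y‖ ≤ C * ‖x - y‖)
    (t : ℝ) (ht : 0 < t) (htC : t ≤ 1 / C)
    (xstar : E) (hmin : ∀ y : E, f xstar ≤ f y) :
    ∀ x : E, f (x - t • gradient f x) - f xstar
      ≤ 1 / (2 * t) * (‖x - xstar‖ ^ 2 - ‖x - t • gradient f x - xstar‖ ^ 2) :=
  gradient_step_telescoping_bound_general f hconv hdiff C hC hlip t ht htC xstar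
end
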